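/- arXiv:1811.02537 — 4 statements merged into one kernel-verified Lean document; each statement's English description precedes it below -/
import Mathlib

section
/- Let G be a subgroup of PGL_2(F_q) generated by two commuting elements g_1, g_2 of orders d_1 and d_2 respectively, such that g_1^{d_1/d} = g_2^{d_2/d} where d = gcd(d_1, d_2). Then G is cyclic. -/
/-!
Dividing the orders by their gcd gives coprime exponents `a`, `b` with `g₁ ^ a = g₂ ^ b`.
With a Bézout relation `u * a + v * b = 1`, the element `t = g₂ ^ u * g₁ ^ v` satisfies
`t ^ a = g₂` and `t ^ b = g₁` because `g₁` and `g₂` commute, so `t` generates the closure.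
-/

variable {F : Type*} [Field F] [Fintype F]

/-- The projective general linear group `PGL₂(F)`, as the quotient of `GL₂(F)` by
its center (the scalar matrices). -/
abbrev PGL2 (F : Type*) [Field F] : Type _ :=
  GL (Fin 2) F ⧸ Subgroup.center (GL (Fin 2) F)

namespace Commute

variable {G : Type*} [Group G] {g₁ g₂ : G} {a b : ℤ}

theorem closure_pair_eq_zpowers_of_zpow_eq_zpow (h : Commute g₁ g₂) (hab : IsCoprime a b)
    (hpow : g₁ ^ a = g₂ ^ b) :
    ∃ t, Subgroup.closure {g₁, g₂} = Subgroup.zpowers t := by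
  obtain ⟨u, v, huv⟩ := hab
  have hc : Commute (g₂ ^ u) (g₁ ^ v) := h.symm.zpow_zpow u v
  have ht_a : (g₂ ^ u * g₁ ^ v) ^ a = g₂ := calc
    (g₂ ^ u * g₁ ^ v) ^ a = g₂ ^ (u * a) * (g₁ ^ a) ^ v := by
      rw [hc.mul_zpow, ← zpow_mul, ← zpow_mul, ← zpow_mul, mul_comm v a]
    _ = g₂ ^ (u * a + v * b) := by rw [hpow, ← zpow_mul, mul_comm b v, zpow_add]
    _ = g₂ := by rw [huv, zpow_one]
  have ht_b : (g₂ ^ u * g₁ ^ v) ^ b = g₁ := calc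
    (g₂ ^ u * g₁ ^ v) ^ b = (g₂ ^ b) ^ u * g₁ ^ (v * b) := by
      rw [hc.mul_zpow, ← zpow_mul, ← zpow_mul, ← zpow_mul, mul_comm u b]
    _ = g₁ ^ (u * a + v * b) := by rw [← hpow, ← zpow_mul, mul_comm a u, zpow_add]
    _ = g₁ := by rw [huv, zpow_one]
  refine ⟨g₂ ^ u * g₁ ^ v, le_antisymm ?_ ?_⟩
  · rw [Subgroup.closure_le, Set.insert_subset_iff, Set.singleton_subset_iff]
    exact ⟨⟨b, ht_b⟩, ⟨a, ht_a⟩⟩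
  · rw [Subgroup.zpowers_le]
    exact mul_mem (zpow_mem (Subgroup.subset_closure (by simp)) u)
      (zpow_mem (Subgroup.subset_closure (by simp)) v)

theorem isCyclic_closure_pair_of_pow_eq_pow (h : Commute g₁ g₂) (hg₁ : IsOfFinOrder g₁)
    (hpow : g₁ ^ (orderOf g₁ / (orderOf g₁).gcd (orderOf g₂)) =
      g₂ ^ (orderOf g₂ / (orderOf g₁).gcd (orderOf g₂))) :
    IsCyclic (Subgroup.closure {g₁, g₂}) := by
  have hcop := Nat.coprime_div_gcd_div_gcd (Nat.gcd_pos_of_pos_left (orderOf g₂) hg₁.orderOf_pos)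
  obtain ⟨t, ht⟩ := h.closure_pair_eq_zpowers_of_zpow_eq_zpow (Nat.isCoprime_iff_coprime.mpr hcop)
    (by simpa only [zpow_natCast] using hpow)
  rw [ht]
  infer_instance

end Commute

theorem closure_commuting_cyclic (g₁ g₂ : PGL2 F) (hcomm : Commute g₁ g₂)
    (hpow : g₁ ^ (orderOf g₁ / Nat.gcd (orderOf g₁) (orderOf g₂)) =
      g₂ ^ (orderOf g₂ / Nat.gcd (orderOf g₁) (orderOf g₂))) :
    IsCyclic (Subgroup.closure ({g₁, g₂} : Set (PGL2 F))) :=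
  hcomm.isCyclic_closure_pair_of_pow_eq_pow (isOfFinOrder_of_finite g₁) hpow
end

section
/- Every noncyclic subgroup G of PGL_2(F_q) has the property that any monic irreducible polynomial f over F_q of degree at least 2 which satisfies [B]∘f = f for all [B] ∈ G must have degree exactly 2. -/
open Polynomial

variable {F : Type*} [Field F] [Fintype F]

/-- For `A = [[a,b],[c,d]]`, the polynomial `A ∘ f = (bX+d)^k f((aX+c)/(bX+d))`,
where `k = natDegree f`. -/
noncomputable def mobApply (A : Matrix (Fin 2) (Fin 2) F) (f : F[X]) : F[X] :=
  ∑ i ∈ Finset.range (f.natDegree + 1),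
    C (f.coeff i) * (C (A 0 0) * X + C (A 1 0)) ^ i *
      (C (A 0 1) * X + C (A 1 1)) ^ (f.natDegree - i)

/-- The monic normalization `[A] ∘ f` of `A ∘ f`. -/
noncomputable def mobAct (A : Matrix (Fin 2) (Fin 2) F) (f : F[X]) : F[X] :=
  C (mobApply A f).leadingCoeff⁻¹ * mobApply A f

/-!
Let `α` be the root of `f` in `F[X]/(f)`. If `[B]` fixes `f`, then `(aα + c)/(bα + d)` is again a
root of `f` (the denominator vanishes only if `α ∈ F`), so `B` induces the automorphism `σ_B` of
`F[X]/(f)` sending `α` to it, and `B ↦ σ_B` is a homomorphism on the preimage of `G` in `GL₂(F)`.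
If `σ_B = 1`, then `bα² + (d - a)α - c = 0`, which for `deg f ≥ 3` forces `B` to be scalar.
Hence `G` is a quotient of a subgroup of the cyclic group `Gal(F[X]/(f) / F)`.
-/

section Mobius

variable {K E L : Type*} [Field K] [Field E] [Algebra K E] [Field L] [Algebra K L]

noncomputable def mobiusNum (A : Matrix (Fin 2) (Fin 2) K) (x : E) : E :=
  algebraMap K E (A 0 0) * x + algebraMap K E (A 1 0)

noncomputable def mobiusDenom (A : Matrix (Fin 2) (Fin 2) K) (x : E) : E :=
  algebraMap K E (A 0 1) * x + algebraMap K E (A 1 1)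

noncomputable def mobiusMap (A : Matrix (Fin 2) (Fin 2) K) (x : E) : E :=
  mobiusNum A x / mobiusDenom A x

lemma mobiusNum_mul (A B : Matrix (Fin 2) (Fin 2) K) {x : E} (hA : mobiusDenom A x ≠ 0) :
    mobiusNum (A * B) x = mobiusNum B (mobiusMap A x) * mobiusDenom A x := by
  simp only [mobiusDenom] at hA
  simp only [mobiusNum, mobiusDenom, mobiusMap, Matrix.mul_apply, Fin.sum_univ_two, map_add,
    map_mul]
  field_simp
  ring

lemma mobiusDenom_mul (A B : Matrix (Fin 2) (Fin 2) K) {x : E} (hA : mobiusDenom A x ≠ 0) :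
    mobiusDenom (A * B) x = mobiusDenom B (mobiusMap A x) * mobiusDenom A x := by
  simp only [mobiusDenom] at hA
  simp only [mobiusNum, mobiusDenom, mobiusMap, Matrix.mul_apply, Fin.sum_univ_two, map_add,
    map_mul]
  field_simp
  ring

lemma mobiusMap_mul (A B : Matrix (Fin 2) (Fin 2) K) {x : E} (hA : mobiusDenom A x ≠ 0) :
    mobiusMap (A * B) x = mobiusMap B (mobiusMap A x) := by
  rw [mobiusMap, mobiusNum_mul A B hA, mobiusDenom_mul A B hA, mul_div_mul_right _ _ hA]
  rfl

section AlgHomClass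

variable {Φ : Type*} [FunLike Φ E L] [AlgHomClass Φ K E L] (φ : Φ) (A : Matrix (Fin 2) (Fin 2) K)
  (x : E)

lemma map_mobiusNum : φ (mobiusNum A x) = mobiusNum A (φ x) := by
  simp [mobiusNum, AlgHomClass.commutes]

lemma map_mobiusDenom : φ (mobiusDenom A x) = mobiusDenom A (φ x) := by
  simp [mobiusDenom, AlgHomClass.commutes]

lemma map_mobiusMap : φ (mobiusMap A x) = mobiusMap A (φ x) := by
  rw [mobiusMap, map_div₀, map_mobiusNum, map_mobiusDenom, mobiusMap]

end AlgHomClass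

lemma mobiusDenom_ne_zero {A : Matrix (Fin 2) (Fin 2) K} (hA : IsUnit A.det) {x : E}
    (hx : x ∉ Set.range (algebraMap K E)) : mobiusDenom A x ≠ 0 := by
  intro h
  rw [mobiusDenom] at h
  by_cases hb : A 0 1 = 0
  · have hd : A 1 1 = 0 := by simpa [hb] using h
    simp [Matrix.det_fin_two, hb, hd] at hA
  · refine hx ⟨-A 1 1 / A 0 1, ?_⟩
    rw [map_div₀, map_neg, div_eq_iff (by simpa using hb)]
    linear_combination -h

lemma aeval_mobApply (A : Matrix (Fin 2) (Fin 2) K) (f : K[X]) {x : E}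
    (hD : mobiusDenom A x ≠ 0) :
    aeval x (mobApply A f) = mobiusDenom A x ^ f.natDegree * aeval (mobiusMap A x) f := by
  rw [mobApply, map_sum, aeval_eq_sum_range (p := f) (x := mobiusMap A x), Finset.mul_sum]
  refine Finset.sum_congr rfl fun i hi => ?_
  have hi : i ≤ f.natDegree := Nat.lt_succ_iff.mp (Finset.mem_range.mp hi)
  simp only [map_mul, map_pow, map_add, aeval_C, aeval_X, Algebra.smul_def]
  change algebraMap K E (f.coeff i) * mobiusNum A x ^ i * mobiusDenom A x ^ (f.natDegree - i) = _
  rw [← pow_sub_mul_pow (mobiusDenom A x) hi, mobiusMap, div_pow]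
  field_simp

lemma aeval_mobiusMap_eq_zero {A : Matrix (Fin 2) (Fin 2) K} {f : K[X]} (hfix : mobAct A f = f)
    (hf : f ≠ 0) {x : E} (hx : aeval x f = 0) (hD : mobiusDenom A x ≠ 0) :
    aeval (mobiusMap A x) f = 0 := by
  have hA0 : mobApply A f ≠ 0 := by
    intro h
    rw [mobAct, h, mul_zero] at hfix
    exact hf hfix.symm
  have hA : mobApply A f = C (mobApply A f).leadingCoeff * f := calc
    mobApply A f = C (mobApply A f).leadingCoeff *
        (C (mobApply A f).leadingCoeff⁻¹ * mobApply A f) := by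
      rw [← mul_assoc, ← C_mul, mul_inv_cancel₀ (leadingCoeff_ne_zero.mpr hA0), C_1, one_mul]
    _ = C (mobApply A f).leadingCoeff * f := congrArg _ hfix
  have := aeval_mobApply A f hD
  rw [hA, map_mul, hx, mul_zero, eq_comm] at this
  exact (mul_eq_zero.mp this).resolve_left (pow_ne_zero _ hD)

lemma eq_scalar_of_mobiusMap_eq_self {A : Matrix (Fin 2) (Fin 2) K} {x : E}
    (hx : ∀ P : K[X], P.natDegree ≤ 2 → aeval x P = 0 → P = 0)
    (hD : mobiusDenom A x ≠ 0) (hfix : mobiusMap A x = x) :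
    A = Matrix.scalar (Fin 2) (A 0 0) := by
  set P : K[X] := C (A 0 1) * X ^ 2 + C (A 1 1 - A 0 0) * X - C (A 1 0)
  have hP : P = 0 := by
    refine hx P (by simp only [P]; compute_degree) ?_
    rw [mobiusMap, div_eq_iff hD] at hfix
    simp only [P, mobiusNum, mobiusDenom, map_sub, map_add, map_mul, map_pow, aeval_C, aeval_X]
      at hfix ⊢
    linear_combination -hfix
  have hb : A 0 1 = 0 := by simpa [P] using congrArg (coeff · 2) hP
  have hc : A 1 0 = 0 := by simpa [P] using congrArg (coeff · 0) hP
  have hd : A 1 1 - A 0 0 = 0 := by simpa [P] using congrArg (coeff · 1) hP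
  ext i j
  fin_cases i <;> fin_cases j <;> simp [hb, hc, sub_eq_zero.mp hd]

end Mobius

section GaloisRep

variable {K : Type*} [Field K] {f : K[X]}

lemma AdjoinRoot.root_notMem_range_algebraMap (hdeg : 2 ≤ f.natDegree) :
    root f ∉ Set.range (algebraMap K (AdjoinRoot f)) := by
  rintro ⟨c, hc⟩
  have hdvd : f ∣ X - C c := by
    rw [← mk_eq_zero, map_sub, mk_X, mk_C, ← hc, algebraMap_eq, sub_self]
  have := natDegree_le_of_dvd hdvd (X_sub_C_ne_zero c)
  rw [natDegree_X_sub_C] at this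
  omega

variable [Fact (Irreducible f)]

lemma mobiusDenom_root_ne_zero (hdeg : 2 ≤ f.natDegree) (B : GL (Fin 2) K) :
    mobiusDenom (B : Matrix (Fin 2) (Fin 2) K) (AdjoinRoot.root f) ≠ 0 :=
  mobiusDenom_ne_zero (Matrix.isUnits_det_units B) (AdjoinRoot.root_notMem_range_algebraMap hdeg)

lemma aeval_mobiusMap_root (hdeg : 2 ≤ f.natDegree) {B : GL (Fin 2) K}
    (hB : mobAct (B : Matrix (Fin 2) (Fin 2) K) f = f) :
    aeval (mobiusMap (B : Matrix (Fin 2) (Fin 2) K) (AdjoinRoot.root f)) f = 0 :=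
  aeval_mobiusMap_eq_zero hB (Fact.out : Irreducible f).ne_zero
    (AdjoinRoot.aeval_eq f ▸ AdjoinRoot.mk_self) (mobiusDenom_root_ne_zero hdeg B)

instance : FiniteDimensional K (AdjoinRoot f) :=
  (AdjoinRoot.powerBasis (Fact.out : Irreducible f).ne_zero).finite

noncomputable def AdjoinRoot.autOfRoot {x : AdjoinRoot f} (hx : aeval x f = 0) :
    AdjoinRoot f ≃ₐ[K] AdjoinRoot f :=
  AlgEquiv.ofBijective (liftAlgHom f (Algebra.ofId K _) x hx) (AlgHom.bijective _)

@[simp]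
lemma AdjoinRoot.autOfRoot_root {x : AdjoinRoot f} (hx : aeval x f = 0) :
    autOfRoot hx (root f) = x :=
  liftAlgHom_root f _ x hx

variable (f) in
noncomputable def galoisRep (hdeg : 2 ≤ f.natDegree) (H : Subgroup (GL (Fin 2) K))
    (hH : ∀ B ∈ H, mobAct (B : Matrix (Fin 2) (Fin 2) K) f = f) :
    H →* (AdjoinRoot f ≃ₐ[K] AdjoinRoot f) :=
  MonoidHom.mk'
    (fun B => AdjoinRoot.autOfRoot (aeval_mobiusMap_root hdeg (hH B.1 B.2)))
    fun B₁ B₂ => by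
      refine AlgEquiv.coe_toAlgHom_injective (AdjoinRoot.algHom_ext ?_)
      simp only [AlgEquiv.coe_toAlgHom, AlgEquiv.mul_apply, AdjoinRoot.autOfRoot_root]
      rw [map_mobiusMap, AdjoinRoot.autOfRoot_root, Subgroup.coe_mul, Units.val_mul,
        mobiusMap_mul _ _ (mobiusDenom_root_ne_zero hdeg _)]

variable {hdeg : 2 ≤ f.natDegree} {H : Subgroup (GL (Fin 2) K)}
  {hH : ∀ B ∈ H, mobAct (B : Matrix (Fin 2) (Fin 2) K) f = f}

lemma galoisRep_apply_root (B : H) :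
    galoisRep f hdeg H hH B (AdjoinRoot.root f) =
      mobiusMap ((B : GL (Fin 2) K) : Matrix (Fin 2) (Fin 2) K) (AdjoinRoot.root f) :=
  AdjoinRoot.autOfRoot_root _

lemma mem_center_of_galoisRep_eq_one (h3 : 3 ≤ f.natDegree) {B : H}
    (hB : galoisRep f hdeg H hH B = 1) : (B : GL (Fin 2) K) ∈ Subgroup.center (GL (Fin 2) K) := by
  rw [Matrix.GeneralLinearGroup.mem_center_iff_val_mem_range_scalar]
  refine ⟨_, (eq_scalar_of_mobiusMap_eq_self ?_ (mobiusDenom_root_ne_zero hdeg B.1) ?_).symm⟩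
  · intro P hP hPα
    rw [AdjoinRoot.aeval_eq, AdjoinRoot.mk_eq_zero] at hPα
    exact eq_zero_of_dvd_of_natDegree_lt hPα (by omega)
  · rw [← galoisRep_apply_root (hdeg := hdeg) (hH := hH), hB, AlgEquiv.one_apply]

end GaloisRep

lemma isCyclic_of_surjective_of_ker_le {H G C : Type*} [Group H] [Group G] [Group C] [IsCyclic C]
    {π : H →* G} (hπ : Function.Surjective π) (ρ : H →* C) (hker : ρ.ker ≤ π.ker) :
    IsCyclic G := by
  have : IsCyclic (H ⧸ ρ.ker) :=
    isCyclic_of_surjective (QuotientGroup.quotientKerEquivRange ρ).symm (MulEquiv.surjective _)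
  exact isCyclic_of_surjective (QuotientGroup.lift ρ.ker π hker)
    (QuotientGroup.lift_surjective_of_surjective _ _ hπ _)

theorem noncyclic_invariant_degree_two_general (G : Subgroup (PGL2 F)) (hG : ¬IsCyclic G)
    (f : F[X]) (hirr : Irreducible f) (hdeg : 2 ≤ f.natDegree)
    (hinv : ∀ B : GL (Fin 2) F, (B : PGL2 F) ∈ G →
      mobAct (B : Matrix (Fin 2) (Fin 2) F) f = f) :
    f.natDegree = 2 := by
  by_contra hne
  have : Fact (Irreducible f) := ⟨hirr⟩
  have : Finite (AdjoinRoot f) := Module.finite_of_finite F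
  let π := (QuotientGroup.mk' (Subgroup.center (GL (Fin 2) F))).subgroupComap G
  have hπ : Function.Surjective π :=
    MonoidHom.subgroupComap_surjective_of_surjective _ _ (QuotientGroup.mk'_surjective _)
  refine hG (isCyclic_of_surjective_of_ker_le hπ (galoisRep f hdeg _ hinv) fun B hB => ?_)
  exact Subtype.ext ((QuotientGroup.eq_one_iff _).mpr
    (mem_center_of_galoisRep_eq_one (by omega) hB))

theorem noncyclic_invariant_degree_two (G : Subgroup (PGL2 F)) (hG : ¬IsCyclic G)
    (f : F[X]) (hf : f.Monic) (hirr : Irreducible f) (hdeg : 2 ≤ f.natDegree)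
    (hinv : ∀ B : GL (Fin 2) F, (B : PGL2 F) ∈ G →
      mobAct (B : Matrix (Fin 2) (Fin 2) F) f = f) :
    f.natDegree = 2 :=
  noncyclic_invariant_degree_two_general G hG f hirr hdeg hinv
end

section
/- Let q be even and c ∈ F_q such that x^2 + x + c is irreducible over F_q. Then f(x) = x^2 + x + c is invariant under [H_1] and [H_2] where H_1 = [[1,0],[1,1]] and H_2 = [[0,1],[c,1]], and the subgroup of PGL_2(F_q) generated by [H_1], [H_2] is noncyclic. -/
/-!
In characteristic 2 the roots of `f = X² + X + c` are `θ` and `θ + 1`, with `θ (θ + 1) = c`.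
`[H₁]` acts by `x ↦ x + 1` and `[H₂]` by `x ↦ c / (x + 1)`; both swap the two roots, so
both fix `f`. The products `H₁ H₂` and `H₂ H₁` are not proportional (compare their first
rows), so `[H₁]` and `[H₂]` do not commute in `PGL₂(F_q)`, whereas a cyclic group is
commutative.
-/

open Polynomial

variable {F : Type*} [Field F] [Fintype F]

variable {K : Type*} [Field K]

theorem FiniteField.charP_two_of_even_card [Fintype K]
    (h : Even (Fintype.card K)) : CharP K 2 :=
  FiniteField.even_card_iff_char_two.mpr (Nat.even_iff.mp h) ▸ ringChar.charP K

theorem ne_zero_of_irreducible_X_sq_add_X_add_C {c : K}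
    (hc : Irreducible (X ^ 2 + X + C c : K[X])) : c ≠ 0 := by
  rintro rfl
  have hfac : (X ^ 2 + X + C 0 : K[X]) = X * (X + C 1) := by simp only [map_zero, map_one]; ring
  rcases hc.isUnit_or_isUnit hfac with h | h
  · exact not_isUnit_X h
  · exact not_isUnit_X_add_C 1 h

theorem mobApply_X_sq_add_X_add_C (A : Matrix (Fin 2) (Fin 2) K) (c : K) :
    mobApply A (X ^ 2 + X + C c) =
      (C (A 0 0) * X + C (A 1 0)) ^ 2 +
        (C (A 0 0) * X + C (A 1 0)) * (C (A 0 1) * X + C (A 1 1)) +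
          C c * (C (A 0 1) * X + C (A 1 1)) ^ 2 := by
  have hdeg : (X ^ 2 + X + C c : K[X]).natDegree = 2 := by compute_degree!
  simp only [mobApply, hdeg, Finset.sum_range_succ, Finset.sum_range_zero, coeff_add,
    coeff_X_pow, coeff_X, coeff_C, OfNat.zero_ne_ofNat, OfNat.one_ne_ofNat, OfNat.ofNat_ne_zero,
    one_ne_zero, ↓reduceIte, add_zero, zero_add, pow_zero, pow_one, mul_one, one_mul, map_one,
    tsub_zero, tsub_self, Nat.add_one_sub_one]
  ring

theorem mobAct_eq_self_of_mobApply_eq_C_mul {A : Matrix (Fin 2) (Fin 2) K} {f : K[X]} {u : K}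
    (hf : f.Monic) (hu : u ≠ 0) (h : mobApply A f = C u * f) : mobAct A f = f := by
  rw [mobAct, h, leadingCoeff_mul, leadingCoeff_C, hf.leadingCoeff, mul_one, ← mul_assoc,
    ← map_mul, inv_mul_cancel₀ hu, map_one, one_mul]

section CharTwo

variable [CharP K 2]

theorem mobAct_shift_X_sq_add_X_add_C (c : K) :
    mobAct !![1, 0; 1, 1] (X ^ 2 + X + C c) = X ^ 2 + X + C c := by
  refine mobAct_eq_self_of_mobApply_eq_C_mul (by monicity!) one_ne_zero ?_
  rw [mobApply_X_sq_add_X_add_C]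
  simp only [Matrix.of_apply, Matrix.cons_val', Matrix.cons_val_zero, Matrix.cons_val_one,
    Matrix.empty_val', Matrix.cons_val_fin_one, map_zero, map_one]
  linear_combination (X + 1) * (CharTwo.two_eq_zero : (2 : K[X]) = 0)

theorem mobAct_recipShift_X_sq_add_X_add_C {c : K} (hc : c ≠ 0) :
    mobAct !![0, 1; c, 1] (X ^ 2 + X + C c) = X ^ 2 + X + C c := by
  refine mobAct_eq_self_of_mobApply_eq_C_mul (by monicity!) hc ?_
  rw [mobApply_X_sq_add_X_add_C]
  simp only [Matrix.of_apply, Matrix.cons_val', Matrix.cons_val_zero, Matrix.cons_val_one,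
    Matrix.empty_val', Matrix.cons_val_fin_one, map_zero, map_one]
  linear_combination (C c * X + C c) * (CharTwo.two_eq_zero : (2 : K[X]) = 0)

end CharTwo

theorem not_isCyclic_closure_pair_of_not_commute {G : Type*} [Group G] {x y : G}
    (h : ¬Commute x y) : ¬IsCyclic (Subgroup.closure {x, y}) := by
  intro hcyc
  let := hcyc.commGroup
  have hxy := mul_comm (⟨x, Subgroup.subset_closure (by simp)⟩ : Subgroup.closure {x, y})
    ⟨y, Subgroup.subset_closure (by simp)⟩
  exact h (congrArg Subtype.val hxy)

theorem Matrix.GeneralLinearGroup.exists_smul_of_commute_mk {n R : Type*} [Fintype n]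
    [DecidableEq n] [CommRing R] {a b : GL n R}
    (h : Commute (a : GL n R ⧸ Subgroup.center (GL n R)) b) :
    ∃ r : R, ((a * b : GL n R) : Matrix n n R) = r • ((b * a : GL n R) : Matrix n n R) := by
  have hz : (b * a)⁻¹ * (a * b) ∈ Subgroup.center (GL n R) :=
    QuotientGroup.eq.mp (by rw [QuotientGroup.mk_mul, QuotientGroup.mk_mul]; exact h.eq.symm)
  obtain ⟨r, hr⟩ := mem_center_iff_val_mem_range_scalar.mp hz
  refine ⟨r, ?_⟩
  rw [← mul_inv_cancel_left (b * a) (a * b), Units.val_mul _ ((b * a)⁻¹ * (a * b)), ← hr]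
  simp [← Matrix.smul_one_eq_diagonal]

theorem not_commute_mk_shift_recipShift (c : K)
    (h₁ : IsUnit (!![1, 0; 1, 1] : Matrix (Fin 2) (Fin 2) K))
    (h₂ : IsUnit (!![0, 1; c, 1] : Matrix (Fin 2) (Fin 2) K)) :
    ¬Commute (h₁.unit : PGL2 K) (h₂.unit : PGL2 K) := by
  intro h
  obtain ⟨r, hr⟩ := Matrix.GeneralLinearGroup.exists_smul_of_commute_mk h
  have hr₀₀ : r = 0 := by
    simpa [Matrix.mul_apply, Fin.sum_univ_two] using (congrFun₂ hr 0 0).symm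
  have hr₀₁ : r = 1 := by
    simpa [Matrix.mul_apply, Fin.sum_univ_two] using (congrFun₂ hr 0 1).symm
  exact zero_ne_one (hr₀₀.symm.trans hr₀₁)

theorem quadratic_invariant_noncyclic_even (hq : Even (Fintype.card F)) (c : F)
    (hc : Irreducible (X ^ 2 + X + C c)) :
    mobAct (!![1, 0; 1, 1] : Matrix (Fin 2) (Fin 2) F) (X ^ 2 + X + C c) = X ^ 2 + X + C c ∧
    mobAct (!![0, 1; c, 1] : Matrix (Fin 2) (Fin 2) F) (X ^ 2 + X + C c) = X ^ 2 + X + C c ∧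
    ∃ (h₁ : IsUnit (!![1, 0; 1, 1] : Matrix (Fin 2) (Fin 2) F))
      (h₂ : IsUnit (!![0, 1; c, 1] : Matrix (Fin 2) (Fin 2) F)),
      ¬IsCyclic (Subgroup.closure
        ({(h₁.unit : PGL2 F), (h₂.unit : PGL2 F)} : Set (PGL2 F))) := by
  have := FiniteField.charP_two_of_even_card hq
  have hc0 := ne_zero_of_irreducible_X_sq_add_X_add_C hc
  have h₁ : IsUnit (!![1, 0; 1, 1] : Matrix (Fin 2) (Fin 2) F) := by
    simp [Matrix.isUnit_iff_isUnit_det, Matrix.det_fin_two_of]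
  have h₂ : IsUnit (!![0, 1; c, 1] : Matrix (Fin 2) (Fin 2) F) := by
    simpa [Matrix.isUnit_iff_isUnit_det, Matrix.det_fin_two_of] using hc0
  exact ⟨mobAct_shift_X_sq_add_X_add_C c, mobAct_recipShift_X_sq_add_X_add_C hc0, h₁, h₂,
    not_isCyclic_closure_pair_of_not_commute (not_commute_mk_shift_recipShift c h₁ h₂)⟩
end

section
/- Let A ∈ GL_2(F_q) with [A] of order D in PGL_2(F_q), and let n > 2 be an integer not divisible by D. Then there is no monic irreducible polynomial f of degree n over F_q with [A]∘f = f. -/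
open Polynomial

section FrozenDefs

variable {F : Type*} [Field F] [Fintype F]

/-- The order of `[A]` in `PGL₂(F)`: the least `D ≥ 1` such that `A ^ D` is a
(nonzero) scalar matrix. -/
noncomputable def pglOrder (A : Matrix (Fin 2) (Fin 2) F) : ℕ :=
  sInf {D : ℕ | 0 < D ∧ ∃ c : F, c ≠ 0 ∧ A ^ D = c • (1 : Matrix (Fin 2) (Fin 2) F)}

end FrozenDefs

section MobiusHelpers

variable {F : Type*} [Field F] {K : Type*} [Field K] [Algebra F K]

/-- numerator of the Möbius map of `A` at `x` -/
noncomputable def mnum (A : Matrix (Fin 2) (Fin 2) F) (x : K) : K :=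
  algebraMap F K (A 0 0) * x + algebraMap F K (A 1 0)

/-- denominator of the Möbius map of `A` at `x` -/
noncomputable def mden (A : Matrix (Fin 2) (Fin 2) F) (x : K) : K :=
  algebraMap F K (A 0 1) * x + algebraMap F K (A 1 1)

/-- the Möbius map of `A` at `x` -/
noncomputable def mpt (A : Matrix (Fin 2) (Fin 2) F) (x : K) : K :=
  mnum A x / mden A x

lemma mden_one (x : K) : mden (1 : Matrix (Fin 2) (Fin 2) F) x = 1 := by
  simp [mden, Matrix.one_apply]

lemma mpt_one (x : K) : mpt (1 : Matrix (Fin 2) (Fin 2) F) x = x := by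
  simp [mpt, mnum, mden, Matrix.one_apply]

lemma mden_mul (M N : Matrix (Fin 2) (Fin 2) F) (x : K) (hM : mden M x ≠ 0) :
    mden (M * N) x = mden M x * mden N (mpt M x) := by
  simp only [mden, mnum, mpt, Matrix.mul_apply, Fin.sum_univ_two, map_add, map_mul]
  simp only [mden] at hM
  field_simp [mden, mnum] at *
  ring

lemma mpt_mul (M N : Matrix (Fin 2) (Fin 2) F) (x : K) (hM : mden M x ≠ 0)
    (_hN : mden N (mpt M x) ≠ 0) :
    mpt (M * N) x = mpt N (mpt M x) := by
  have hMN : mden (M * N) x = mden M x * mden N (mpt M x) := mden_mul M N x hM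
  rw [mpt, mpt, hMN]
  simp only [mnum, mden, mpt, Matrix.mul_apply, Fin.sum_univ_two, map_add, map_mul] at *
  field_simp
  ring

lemma mpt_algHom (σ : K →ₐ[F] K) (A : Matrix (Fin 2) (Fin 2) F) (x : K) :
    σ (mpt A x) = mpt A (σ x) := by
  simp only [mpt, mnum, mden, map_div₀, map_add, map_mul, AlgHom.commutes]

lemma scalar_of_three_fixed (M : Matrix (Fin 2) (Fin 2) F) (hM : IsUnit M.det)
    (b1 b2 b3 : K) (h12 : b1 ≠ b2) (h13 : b1 ≠ b3) (h23 : b2 ≠ b3)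
    (e1 : mden M b1 ≠ 0) (e2 : mden M b2 ≠ 0) (e3 : mden M b3 ≠ 0)
    (f1 : mpt M b1 = b1) (f2 : mpt M b2 = b2) (f3 : mpt M b3 = b3) :
    ∃ c : F, c ≠ 0 ∧ M = c • (1 : Matrix (Fin 2) (Fin 2) F) := by
  set a' := algebraMap F K (M 0 0)
  set b' := algebraMap F K (M 0 1)
  set c' := algebraMap F K (M 1 0)
  set d' := algebraMap F K (M 1 1)
  have eq1 : a' * b1 + c' = b1 * (b' * b1 + d') := by
    have := f1; rw [mpt, div_eq_iff e1] at this; simpa [mnum, mden] using this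
  have eq2 : a' * b2 + c' = b2 * (b' * b2 + d') := by
    have := f2; rw [mpt, div_eq_iff e2] at this; simpa [mnum, mden] using this
  have eq3 : a' * b3 + c' = b3 * (b' * b3 + d') := by
    have := f3; rw [mpt, div_eq_iff e3] at this; simpa [mnum, mden] using this
  have key : ∀ x y : K, (a' * x + c' = x * (b' * x + d')) →
      (a' * y + c' = y * (b' * y + d')) → x ≠ y → b' * (x + y) + d' = a' := by
    intro x y ex ey hxy
    have hs : x - y ≠ 0 := sub_ne_zero.mpr hxy
    apply mul_left_cancel₀ hs
    linear_combination ey - ex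
  have k12 := key b1 b2 eq1 eq2 h12
  have k13 := key b1 b3 eq1 eq3 h13
  have hb : b' * (b2 - b3) = 0 := by linear_combination k12 - k13
  have hb0 : b' = 0 := by
    rcases mul_eq_zero.mp hb with h | h
    · exact h
    · exact absurd (sub_eq_zero.mp h) h23
  have hda : d' = a' := by linear_combination k12 - (b1 + b2) * hb0
  have hc0 : c' = 0 := by linear_combination eq1 + b1 * b1 * hb0 + b1 * hda
  have inj := (algebraMap F K).injective
  have hM01 : M 0 1 = 0 := inj (hb0.trans (map_zero _).symm)
  have hM10 : M 1 0 = 0 := inj (hc0.trans (map_zero _).symm)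
  have hM11 : M 1 1 = M 0 0 := inj hda
  refine ⟨M 0 0, ?_, ?_⟩
  · intro h0
    rw [Matrix.det_fin_two, hM01, hM11, h0] at hM
    simp at hM
  · ext i j
    fin_cases i <;> fin_cases j <;>
      simp [Matrix.smul_apply, Matrix.one_apply, hM01, hM10, hM11]

lemma sInf_scalar_dvd (A : Matrix (Fin 2) (Fin 2) F) (n : ℕ) (hn : 0 < n)
    (c : F) (hc : c ≠ 0) (h : A ^ n = c • (1 : Matrix (Fin 2) (Fin 2) F)) :
    sInf {D : ℕ | 0 < D ∧ ∃ c : F, c ≠ 0 ∧ A ^ D = c • (1 : Matrix (Fin 2) (Fin 2) F)} ∣ n := by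
  set S := {D : ℕ | 0 < D ∧ ∃ c : F, c ≠ 0 ∧ A ^ D = c • (1 : Matrix (Fin 2) (Fin 2) F)} with hS
  have hnS : n ∈ S := ⟨hn, c, hc, h⟩
  have hne : S.Nonempty := ⟨n, hnS⟩
  obtain ⟨hD0, c0, hc0, hA0⟩ := Nat.sInf_mem hne
  set D := sInf S
  rcases Nat.eq_zero_or_pos (n % D) with hr | hr
  · exact Nat.dvd_of_mod_eq_zero hr
  exfalso
  have hrS : n % D ∈ S := by
    have hck : (c0 ^ (n / D)) ≠ 0 := pow_ne_zero _ hc0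
    refine ⟨hr, (c0 ^ (n / D))⁻¹ * c, mul_ne_zero (inv_ne_zero hck) hc, ?_⟩
    have hpow : A ^ n = (c0 ^ (n / D)) • A ^ (n % D) := by
      conv_lhs => rw [← Nat.div_add_mod n D]
      rw [pow_add, pow_mul, hA0, _root_.smul_pow, one_pow, smul_mul_assoc, one_mul]
    rw [h] at hpow
    have h2 : A ^ (n % D) = (c0 ^ (n / D))⁻¹ • (c • (1 : Matrix (Fin 2) (Fin 2) F)) := by
      rw [hpow]; exact (inv_smul_smul₀ hck _).symm
    rwa [smul_smul] at h2
  exact absurd (Nat.sInf_le hrS) (not_le.mpr (Nat.mod_lt n hD0))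

end MobiusHelpers

variable {F : Type*} [Field F] [Fintype F]

lemma aeval_mobApply_s17 {K : Type*} [Field K] [Algebra F K]
    (A : Matrix (Fin 2) (Fin 2) F) (f : F[X]) (β : K) (h : mden A β ≠ 0) :
    aeval β (mobApply A f) = mden A β ^ f.natDegree * aeval (mpt A β) f := by
  rw [aeval_eq_sum_range (p := f) (mpt A β), mobApply, map_sum, Finset.mul_sum]
  refine Finset.sum_congr rfl fun i hi => ?_
  have hi' : i ≤ f.natDegree := Nat.lt_succ_iff.mp (Finset.mem_range.mp hi)
  rw [map_mul, map_mul, map_pow, map_pow]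
  simp only [map_add, map_mul, aeval_C, aeval_X, Algebra.smul_def]
  rw [show (algebraMap F K) (A 0 0) * β + (algebraMap F K) (A 1 0) = mnum A β from rfl,
      show (algebraMap F K) (A 0 1) * β + (algebraMap F K) (A 1 1) = mden A β from rfl,
      mpt, div_pow, pow_sub₀ _ h hi']
  field_simp

theorem no_invariants_of_degree_not_divisible (A : Matrix (Fin 2) (Fin 2) F)
    (hA : IsUnit A.det) (n : ℕ) (hn : 2 < n) (hdvd : ¬ pglOrder A ∣ n) :
    ¬∃ f : F[X], f.Monic ∧ Irreducible f ∧ f.natDegree = n ∧ mobAct A f = f := by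
  rintro ⟨f, hmonic, hirr, hdeg, hfix⟩
  haveI := Fact.mk hirr
  have hf0 : f ≠ 0 := hmonic.ne_zero
  haveI : Module.Finite F (AdjoinRoot f) := (AdjoinRoot.powerBasis hf0).finite
  haveI : Finite (AdjoinRoot f) := Module.finite_of_finite F
  -- the leading coefficient of `mobApply A f` is nonzero
  have hg0 : mobApply A f ≠ 0 := by
    intro h0
    rw [mobAct, h0, mul_zero] at hfix
    exact hf0 hfix.symm
  have hlc : (mobApply A f).leadingCoeff ≠ 0 := leadingCoeff_ne_zero.mpr hg0
  -- the Möbius denominator of `A` is nonzero at any root of `f`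
  have hdenA : ∀ β : AdjoinRoot f, aeval β f = 0 → mden A β ≠ 0 := by
    intro β hβ hd
    have hmin : minpoly F β = f := (minpoly.eq_of_irreducible_of_monic hirr hβ hmonic).symm
    by_cases hb : A 0 1 = 0
    · rw [mden, hb, map_zero, zero_mul, zero_add] at hd
      have h11 : A 1 1 = 0 := (algebraMap F (AdjoinRoot f)).injective
        (hd.trans (map_zero _).symm)
      rw [Matrix.det_fin_two, hb, h11] at hA
      simp at hA
    · have hba : (algebraMap F (AdjoinRoot f)) (A 0 1) ≠ 0 := fun h =>
        hb ((algebraMap F (AdjoinRoot f)).injective (h.trans (map_zero _).symm))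
      have hβval : β = algebraMap F (AdjoinRoot f) (-(A 1 1) / (A 0 1)) := by
        rw [map_div₀, map_neg, eq_div_iff hba]
        rw [mden] at hd
        linear_combination hd
      have h1 : minpoly F β = X - C (-(A 1 1) / (A 0 1)) := by
        rw [hβval]; exact minpoly.eq_X_sub_C _ _
      rw [hmin] at h1
      have : f.natDegree = 1 := by rw [h1]; exact natDegree_X_sub_C _
      omega
  -- the Möbius map of `A` sends roots of `f` to roots of `f`
  have hroot_mpt : ∀ β : AdjoinRoot f, aeval β f = 0 → aeval (mpt A β) f = 0 := by
    intro β hβ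
    have hd := hdenA β hβ
    have h1 : (aeval β) (mobApply A f) = 0 := by
      have h2 : aeval β (mobAct A f) = 0 := by rw [hfix]; exact hβ
      rw [mobAct, map_mul, aeval_C] at h2
      rcases mul_eq_zero.mp h2 with h | h
      · exact absurd ((algebraMap F (AdjoinRoot f)).injective (h.trans (map_zero _).symm))
          (inv_ne_zero hlc)
      · exact h
    rw [aeval_mobApply_s17 A f β hd] at h1
    rcases mul_eq_zero.mp h1 with h | h
    · exact absurd h (pow_ne_zero _ hd)
    · exact h
  -- iterates
  have hiter : ∀ m : ℕ, ∀ β : AdjoinRoot f, aeval β f = 0 →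
      mden (A ^ m) β ≠ 0 ∧ aeval (mpt (A ^ m) β) f = 0 := by
    intro m
    induction m with
    | zero =>
      intro β hβ
      rw [pow_zero]
      refine ⟨by rw [mden_one]; exact one_ne_zero, by rw [mpt_one]; exact hβ⟩
    | succ m ih =>
      intro β hβ
      obtain ⟨h1, h2⟩ := ih β hβ
      have h3 : mden A (mpt (A ^ m) β) ≠ 0 := hdenA _ h2
      have h4 : mden (A ^ (m + 1)) β ≠ 0 := by
        rw [pow_succ, mden_mul _ _ _ h1]; exact mul_ne_zero h1 h3
      have h5 : mpt (A ^ (m + 1)) β = mpt A (mpt (A ^ m) β) := by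
        rw [pow_succ, mpt_mul _ _ _ h1 h3]
      exact ⟨h4, by rw [h5]; exact hroot_mpt _ h2⟩
  -- the root and the automorphism
  set α : AdjoinRoot f := AdjoinRoot.root f with hαdef
  have hα : aeval α f = 0 := by rw [AdjoinRoot.aeval_eq]; exact AdjoinRoot.mk_self
  set ψ : AdjoinRoot f →ₐ[F] AdjoinRoot f := AdjoinRoot.liftAlgHom f (Algebra.ofId F _) (mpt A α) (hroot_mpt α hα)
    with hψdef
  have hσbij : Function.Bijective ψ :=
    Finite.injective_iff_bijective.mp ψ.toRingHom.injective
  set σ : AdjoinRoot f ≃ₐ[F] AdjoinRoot f := AlgEquiv.ofBijective ψ hσbij with hσdef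
  have hσα : σ α = mpt A α := by
    show ψ (AdjoinRoot.root f) = mpt A α
    rw [hψdef]; exact AdjoinRoot.liftAlgHom_root f _ _ (hroot_mpt α hα)
  -- commutation
  have hcomm : ∀ (τ : AdjoinRoot f ≃ₐ[F] AdjoinRoot f) (M : Matrix (Fin 2) (Fin 2) F)
      (x : AdjoinRoot f), τ (mpt M x) = mpt M (τ x) := fun τ M x => mpt_algHom τ.toAlgHom M x
  -- iterate formula
  have hpowα : ∀ m : ℕ, mpt (A ^ m) α = (σ ^ m) α := by
    intro m
    induction m with
    | zero => rw [pow_zero, pow_zero, mpt_one]; rfl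
    | succ m ih =>
      obtain ⟨h1, h2⟩ := hiter m α hα
      have h3 : mden A (mpt (A ^ m) α) ≠ 0 := hdenA _ h2
      rw [pow_succ, mpt_mul _ _ _ h1 h3, ih, ← hcomm, ← hσα, pow_succ]
      rfl
  -- Galois: card of automorphism group is n
  have hcard : Fintype.card (AdjoinRoot f ≃ₐ[F] AdjoinRoot f) = n := by
    rw [← Nat.card_eq_fintype_card, IsGalois.card_aut_eq_finrank, (AdjoinRoot.powerBasis hf0).finrank,
      AdjoinRoot.powerBasis_dim, hdeg]
  have hσn : σ ^ n = 1 := by rw [← hcard]; exact pow_card_eq_one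
  have hfixα : mpt (A ^ n) α = α := by rw [hpowα n, hσn]; rfl
  -- every conjugate of α is fixed by the Möbius map of A^n
  have hfixτ : ∀ τ : AdjoinRoot f ≃ₐ[F] AdjoinRoot f, mpt (A ^ n) (τ α) = τ α := by
    intro τ
    rw [← hcomm, hfixα]
  have hrootτ : ∀ τ : AdjoinRoot f ≃ₐ[F] AdjoinRoot f, aeval (τ α) f = 0 := by
    intro τ
    simpa [hα] using aeval_algHom_apply (↑τ : AdjoinRoot f →ₐ[F] AdjoinRoot f) α f
  -- injectivity of τ ↦ τ α
  have hinj : Function.Injective (fun τ : AdjoinRoot f ≃ₐ[F] AdjoinRoot f => τ α) := by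
    intro τ1 τ2 h
    have h' : τ1.toAlgHom = τ2.toAlgHom := AdjoinRoot.algHom_ext h
    exact AlgEquiv.ext fun x => AlgHom.congr_fun h' x
  -- three distinct automorphisms
  obtain ⟨τ1, τ2, τ3, h12, h13, h23⟩ := Fintype.two_lt_card_iff.mp (hcard ▸ hn)
  obtain ⟨c, hc, hAn⟩ := scalar_of_three_fixed (A ^ n) (by rw [Matrix.det_pow]; exact hA.pow n)
    (τ1 α) (τ2 α) (τ3 α)
    (fun h => h12 (hinj h)) (fun h => h13 (hinj h)) (fun h => h23 (hinj h))
    ((hiter n (τ1 α) (hrootτ τ1)).1) ((hiter n (τ2 α) (hrootτ τ2)).1)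
    ((hiter n (τ3 α) (hrootτ τ3)).1)
    (hfixτ τ1) (hfixτ τ2) (hfixτ τ3)
  exact hdvd (sInf_scalar_dvd A n (by omega) c hc hAn)
end
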